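/- arXiv:2010.03478 — 5 statements merged into one kernel-verified Lean document; each statement's English description precedes it below -/
import Mathlib

section
/- For γ_i > 0, ε > 0, Δq > 0, and the summation curve S(x) = Σ_{k∈ℤ} √(γ_i/(πε)) exp(−(γ_i/ε)(x − kΔq)²), one has for every positive integer s and all x ∈ ℝ the bound |S(x) − 1/Δq| ≤ (2·s!·γ_i^s/(π^{2s} ε^s)) · (Δq)^{2s−1}. -/
open Real HurwitzZeta

/-!
Poisson summation (the functional equation of the even Hurwitz kernel) turns the lattice sum of
Gaussians of width `a` into `Δ⁻¹` times the theta series `∑ₙ cos(2πnx/Δ) exp(-π²n²/(aΔ²))`.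
Its deviation from the constant term is dominated by the cosine-free series, which a geometric
series bounds by `2 / (exp d - 1)` with `d = π²/(aΔ²)`; finally `exp d - 1 ≥ dˢ / s!`.
-/

lemma pow_div_factorial_le_exp_sub_one {d : ℝ} (hd : 0 ≤ d) {s : ℕ} (hs : 1 ≤ s) :
    d ^ s / s.factorial ≤ exp d - 1 := by
  have hconst : (1 : ℝ) ≤ ∑ i ∈ Finset.range s, d ^ i / i.factorial := by
    simpa using Finset.single_le_sum (f := fun i ↦ d ^ i / (i.factorial : ℝ))
      (fun i _ ↦ by positivity) (Finset.mem_range.2 hs)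
  have hpartial := sum_le_exp_of_nonneg hd (s + 1)
  rw [Finset.sum_range_succ] at hpartial
  linarith

lemma one_div_exp_sub_one_le {d : ℝ} (hd : 0 < d) {s : ℕ} (hs : 1 ≤ s) :
    1 / (exp d - 1) ≤ s.factorial / d ^ s := by
  simpa only [one_div_div] using
    one_div_le_one_div_of_le (by positivity) (pow_div_factorial_le_exp_sub_one hd.le hs)

lemma abs_cosKernel_sub_one_le_cosKernel_zero_sub_one (a : ℝ) {t : ℝ} (ht : 0 < t) :
    |cosKernel a t - 1| ≤ cosKernel 0 t - 1 := by
  have hzero := hasSum_nat_cosKernel₀ 0 ht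
  simp only [mul_zero, zero_mul, Real.cos_zero, mul_one, AddCircle.coe_zero] at hzero
  refine (hasSum_nat_cosKernel₀ a ht).norm_le_of_bounded hzero fun n ↦ ?_
  rw [norm_mul, norm_mul, Real.norm_of_nonneg (exp_pos _).le, Real.norm_two, Real.norm_eq_abs]
  gcongr
  linarith [abs_cos_le_one (2 * π * a * (n + 1))]

lemma cosKernel_zero_sub_one_le {t : ℝ} (ht : 0 < t) :
    cosKernel 0 t - 1 ≤ 2 / (exp (π * t) - 1) := by
  have htheta := norm_jacobiTheta_sub_one_le (τ := Complex.I * t) (by simpa using ht)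
  rw [jacobiTheta_eq_jacobiTheta₂, ← Complex.ofReal_zero, ← cosKernel_def, ← Complex.ofReal_one,
    ← Complex.ofReal_sub, Complex.norm_real, AddCircle.coe_zero] at htheta
  have hexp : 2 / (1 - exp (-π * (Complex.I * t).im)) * exp (-π * (Complex.I * t).im) =
      2 / (exp (π * t) - 1) := by
    have : 1 < exp (π * t) := one_lt_exp_iff.2 (by positivity)
    simp only [Complex.mul_im, Complex.I_re, Complex.I_im, Complex.ofReal_re, Complex.ofReal_im,
      zero_mul, one_mul, zero_add, neg_mul, exp_neg]
    field_simp
  exact (le_abs_self _).trans (htheta.trans_eq hexp)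

lemma abs_cosKernel_sub_one_le (a : ℝ) {t : ℝ} (ht : 0 < t) :
    |cosKernel a t - 1| ≤ 2 / (exp (π * t) - 1) :=
  (abs_cosKernel_sub_one_le_cosKernel_zero_sub_one a ht).trans (cosKernel_zero_sub_one_le ht)

lemma tsum_gaussian_lattice_eq_cosKernel {a Δ : ℝ} (ha : 0 < a) (hΔ : 0 < Δ) (x : ℝ) :
    ∑' k : ℤ, √(a / π) * exp (-a * (x - k * Δ) ^ 2) =
      cosKernel ↑(-(x / Δ)) (π / (a * Δ ^ 2)) / Δ := by
  have hπ := pi_pos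
  have hterm (k : ℤ) : -π * (k + -(x / Δ)) ^ 2 * (a * Δ ^ 2 / π) = -a * (x - k * Δ) ^ 2 := by
    field_simp; ring
  have hsum := hasSum_int_evenKernel (-(x / Δ)) (t := a * Δ ^ 2 / π) (by positivity)
  simp only [hterm] at hsum
  have hratio : a / π / (a * Δ ^ 2 / π) = (1 / Δ) ^ 2 := by field_simp
  rw [tsum_mul_left, hsum.tsum_eq, evenKernel_functional_equation, ← sqrt_eq_rpow, one_div_div,
    ← mul_assoc, ← div_eq_mul_one_div, ← sqrt_div' _ (by positivity), hratio,
    sqrt_sq (by positivity), one_div_mul_eq_div]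

lemma abs_tsum_gaussian_lattice_sub_le {a Δ : ℝ} (ha : 0 < a) (hΔ : 0 < Δ) (x : ℝ) :
    |∑' k : ℤ, √(a / π) * exp (-a * (x - k * Δ) ^ 2) - 1 / Δ| ≤
      2 / (exp (π ^ 2 / (a * Δ ^ 2)) - 1) / Δ := by
  rw [tsum_gaussian_lattice_eq_cosKernel ha hΔ, div_sub_div_same, abs_div, abs_of_pos hΔ, sq π,
    mul_div_assoc]
  gcongr
  exact abs_cosKernel_sub_one_le _ (by positivity)

theorem summation_curve_spectral_convergence
    (γi ε Δq : ℝ) (hγ : 0 < γi) (hε : 0 < ε) (hΔ : 0 < Δq)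
    (S : ℝ → ℝ)
    (hS : ∀ x : ℝ, S x =
      ∑' k : ℤ, Real.sqrt (γi / (Real.pi * ε)) * Real.exp (-(γi / ε) * (x - k * Δq) ^ 2))
    (s : ℕ) (hs : 1 ≤ s) (x : ℝ) :
    |S x - 1 / Δq| ≤
      (2 * (s.factorial : ℝ) * γi ^ s / (Real.pi ^ (2 * s) * ε ^ s)) * Δq ^ (2 * s - 1) := by
  have hπ := pi_pos
  have hd : 0 < π ^ 2 / (γi / ε * Δq ^ 2) := by positivity
  rw [hS, show γi / (π * ε) = γi / ε / π by ring]
  calc _ ≤ 2 / (exp (π ^ 2 / (γi / ε * Δq ^ 2)) - 1) / Δq :=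
        abs_tsum_gaussian_lattice_sub_le (by positivity) hΔ x
    _ ≤ 2 * (s.factorial / (π ^ 2 / (γi / ε * Δq ^ 2)) ^ s) / Δq := by
        rw [← mul_one_div 2]
        gcongr 2 * ?_ / _
        exact one_div_exp_sub_one_le hd hs
    _ = _ := by
        rw [pow_sub₀ Δq hΔ.ne' (by omega), pow_mul, pow_mul, pow_one]
        field_simp
        rw [← mul_pow, ← mul_pow, ← mul_pow]
        field_simp
end

section
/- Let ε > 0, b ∈ ℝ, and define f(p) = exp(−p²/(2ε) + i b p / ε) for p ∈ ℝ. Then for every integer s ≥ 1 and every p ∈ ℝ, the s-th derivative satisfies |f^{(s)}(p)| ≤ e^{−p²/(2ε)} · s! · Σ_{m=0}^{⌊s/2⌋} (|p| + |b|)^{s−2m} / (2^m ε^{s−m} m! (s−2m)!). -/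
/-!
Completing the square, `f p = e^{-b²/(2ε)} G ((p - i b) / √ε)` with `G z = e^{-z²/2}`, and
`G^{(s)} = (-1)^s He_s · G` for the probabilists' Hermite polynomial `He_s`. Hence
`f^{(s)} p = (-1/√ε)^s He_s ((p - i b) / √ε) f p` with `‖f p‖ = e^{-p²/(2ε)}`. The only nonzero
coefficients of `He_s` are those of `z^{s-2m}`, of absolute value `s! / (2^m m! (s-2m)!)`, so the
triangle inequality together with `‖p - i b‖ ≤ |p| + |b|` gives the bound.
-/

open Polynomial Complex
open scoped Nat

theorem Nat.two_pow_mul_factorial_mul_doubleFactorial (m : ℕ) :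
    2 ^ m * m ! * (2 * m - 1)‼ = (2 * m)! := by
  cases m with
  | zero => rfl
  | succ n =>
    rw [show 2 * (n + 1) - 1 = 2 * n + 1 by omega, ← Nat.doubleFactorial_two_mul,
      show 2 * (n + 1) = 2 * n + 1 + 1 by omega, Nat.factorial_eq_mul_doubleFactorial]

theorem Finset.sum_range_succ_eq_sum_sub_two_mul {M : Type*} [AddCommMonoid M] (s : ℕ)
    (f : ℕ → M) (hf : ∀ k, Odd (s + k) → f k = 0) :
    ∑ k ∈ range (s + 1), f k = ∑ m ∈ range (s / 2 + 1), f (s - 2 * m) := by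
  rw [← Finset.sum_image (g := fun m => s - 2 * m) (fun m hm n hn h => by
    simp only [coe_range, Set.mem_Iio] at hm hn h; omega)]
  refine (Finset.sum_subset (fun k => by simp only [mem_image, mem_range]; omega)
    fun k hk hk' => hf k ?_).symm
  simp only [mem_image, mem_range, not_exists, not_and] at hk hk'
  rw [Nat.odd_iff]
  by_contra h
  exact hk' ((s - k) / 2) (by omega) (by omega)

namespace Polynomial

theorem coeff_hermite_sub_two_mul {s m : ℕ} (h : 2 * m ≤ s) :
    (hermite s).coeff (s - 2 * m) * (2 ^ m * m ! * (s - 2 * m)!) = (-1) ^ m * s ! := by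
  obtain ⟨k, rfl⟩ := Nat.exists_eq_add_of_le h
  rw [Nat.add_sub_cancel_left, coeff_hermite_explicit, mul_assoc, mul_assoc]
  congr 1
  rw [← Nat.add_choose_mul_factorial_mul_factorial,
    ← Nat.two_pow_mul_factorial_mul_doubleFactorial]
  push_cast
  ring

theorem aeval_hermite_eq_sum {K : Type*} [Field K] [CharZero K] (s : ℕ) (z : K) :
    aeval z (hermite s) = ∑ m ∈ Finset.range (s / 2 + 1),
      (-1) ^ m * s ! / (2 ^ m * m ! * (s - 2 * m)!) * z ^ (s - 2 * m) := by
  rw [aeval_eq_sum_range, natDegree_hermite,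
    Finset.sum_range_succ_eq_sum_sub_two_mul s _ fun k hk => by simp [coeff_hermite_of_odd_add hk]]
  refine Finset.sum_congr rfl fun m hm => ?_
  have h := coeff_hermite_sub_two_mul (by simp only [Finset.mem_range] at hm; omega : 2 * m ≤ s)
  rw [zsmul_eq_mul]
  congr 1
  rw [eq_div_iff (by simp [Nat.factorial_ne_zero])]
  exact_mod_cast h

theorem norm_aeval_hermite_le {𝕜 : Type*} [RCLike 𝕜] (s : ℕ) (z : 𝕜) :
    ‖aeval z (hermite s)‖ ≤ ∑ m ∈ Finset.range (s / 2 + 1),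
      s ! / (2 ^ m * m ! * (s - 2 * m)!) * ‖z‖ ^ (s - 2 * m) := by
  rw [aeval_hermite_eq_sum]
  refine (norm_sum_le _ _).trans (Finset.sum_le_sum fun m _ => ?_)
  rw [norm_mul, norm_pow, norm_div, norm_mul, norm_pow, norm_neg, norm_one, one_pow, one_mul]
  simp only [norm_mul, norm_pow, RCLike.norm_natCast, RCLike.norm_ofNat, le_refl]

theorem inv_sqrt_pow_mul_norm_aeval_hermite_div_le {𝕜 : Type*} [RCLike 𝕜] {ε : ℝ}
    (hε : 0 < ε) (s : ℕ) (u : 𝕜) :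
    (√ε)⁻¹ ^ s * ‖aeval (u / (√ε : 𝕜)) (hermite s)‖ ≤
      s ! * ∑ m ∈ Finset.range (s / 2 + 1),
        ‖u‖ ^ (s - 2 * m) / (2 ^ m * ε ^ (s - m) * m ! * (s - 2 * m)!) := by
  have hr : 0 < √ε := Real.sqrt_pos.mpr hε
  have hu : ‖u / (√ε : 𝕜)‖ = ‖u‖ / √ε := by
    rw [norm_div, RCLike.norm_ofReal, abs_of_pos hr]
  refine (mul_le_mul_of_nonneg_left (norm_aeval_hermite_le s _) (by positivity)).trans_eq ?_
  rw [hu, Finset.mul_sum, Finset.mul_sum]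
  refine Finset.sum_congr rfl fun m hm => ?_
  have hpow : √ε ^ s * √ε ^ (s - 2 * m) = ε ^ (s - m) := by
    simp only [Finset.mem_range] at hm
    rw [← pow_add, show s + (s - 2 * m) = 2 * (s - m) by omega, pow_mul, Real.sq_sqrt hε.le]
  rw [← hpow, div_pow, inv_pow]
  field_simp

end Polynomial

namespace Complex

theorem hasDerivAt_aeval_hermite_mul_cexp (n : ℕ) (z : ℂ) :
    HasDerivAt (fun z => aeval z (hermite n) * cexp (-z ^ 2 / 2))
      (-(aeval z (hermite (n + 1)) * cexp (-z ^ 2 / 2))) z := by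
  have hexp : HasDerivAt (fun z : ℂ => cexp (-z ^ 2 / 2)) (cexp (-z ^ 2 / 2) * -z) z := by
    have hq : HasDerivAt (fun z : ℂ => -z ^ 2 / 2) (-z) z := by
      refine ((hasDerivAt_pow 2 z).fun_neg.div_const 2).congr_deriv ?_
      ring
    exact hq.cexp
  refine ((Polynomial.hasDerivAt_aeval (hermite n) z).mul hexp).congr_deriv ?_
  rw [hermite_succ, map_sub, map_mul, aeval_X]
  ring

theorem iteratedDeriv_cexp_neg_sq_div_two (c w : ℂ) (n : ℕ) :
    iteratedDeriv n (fun x : ℝ => cexp (-(((x : ℂ) - c) / w) ^ 2 / 2)) = fun x : ℝ =>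
      (-w⁻¹) ^ n *
        (aeval (((x : ℂ) - c) / w) (hermite n) * cexp (-(((x : ℂ) - c) / w) ^ 2 / 2)) := by
  induction n with
  | zero => funext x; simp
  | succ n ih =>
    funext x
    have haffine : HasDerivAt (fun x : ℝ => ((x : ℂ) - c) / w) w⁻¹ x := by
      simpa [div_eq_mul_inv] using ((hasDerivAt_id (x : ℂ)).comp_ofReal.sub_const c).div_const w
    rw [iteratedDeriv_succ, ih]
    refine (((hasDerivAt_aeval_hermite_mul_cexp n _).comp x haffine).const_mul _).deriv.trans ?_
    ring

theorem cexp_neg_sq_div_add_I_mul_eq {ε w : ℂ} (hw : w ^ 2 = ε) (b x : ℂ) :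
    cexp (-x ^ 2 / (2 * ε) + I * b * x / ε) =
      cexp (-b ^ 2 / (2 * ε)) * cexp (-((x - I * b) / w) ^ 2 / 2) := by
  rw [← Complex.exp_add, ← hw]
  congr 1
  linear_combination (b ^ 2 / (2 * w ^ 2)) * I_sq

theorem norm_cexp_neg_sq_div_add_I_mul (ε b x : ℝ) :
    ‖cexp (-(x : ℂ) ^ 2 / (2 * ε) + I * b * x / ε)‖ = Real.exp (-x ^ 2 / (2 * ε)) := by
  have hre : -(x : ℂ) ^ 2 / (2 * ε) = ((-x ^ 2 / (2 * ε) : ℝ) : ℂ) := by push_cast; ring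
  rw [Complex.norm_exp, add_re, hre, ofReal_re]
  simp

theorem iteratedDeriv_cexp_neg_sq_div_add_I_mul {ε : ℝ} (hε : 0 ≤ ε) (b : ℝ) (s : ℕ) (x : ℝ) :
    iteratedDeriv s (fun x : ℝ => cexp (-(x : ℂ) ^ 2 / (2 * ε) + I * b * x / ε)) x =
      (-(√ε : ℂ)⁻¹) ^ s * aeval (((x : ℂ) - I * b) / √ε) (hermite s) *
        cexp (-(x : ℂ) ^ 2 / (2 * ε) + I * b * x / ε) := by
  have hw : ((√ε : ℝ) : ℂ) ^ 2 = ε := by exact_mod_cast Real.sq_sqrt hε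
  simp_rw [cexp_neg_sq_div_add_I_mul_eq hw, iteratedDeriv_const_mul_field,
    iteratedDeriv_cexp_neg_sq_div_two]
  ring

end Complex

theorem gaussian_derivative_bound_general
    (ε b : ℝ) (hε : 0 < ε)
    (f : ℝ → ℂ)
    (hf : ∀ p : ℝ, f p =
      Complex.exp (-(p : ℂ) ^ 2 / (2 * (ε : ℂ)) + Complex.I * (b : ℂ) * (p : ℂ) / (ε : ℂ)))
    (s : ℕ) (p : ℝ) :
    ‖iteratedDeriv s f p‖ ≤
      Real.exp (-p ^ 2 / (2 * ε)) * (s.factorial : ℝ) *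
        ∑ m ∈ Finset.range (s / 2 + 1),
          (|p| + |b|) ^ (s - 2 * m) /
            (2 ^ m * ε ^ (s - m) * (m.factorial : ℝ) * ((s - 2 * m).factorial : ℝ)) := by
  have hf' : f = fun x : ℝ => cexp (-(x : ℂ) ^ 2 / (2 * ε) + I * b * x / ε) := funext hf
  subst hf'
  have hu : ‖(p : ℂ) - I * b‖ ≤ |p| + |b| := (norm_sub_le _ _).trans_eq (by simp)
  rw [iteratedDeriv_cexp_neg_sq_div_add_I_mul hε.le, norm_mul, norm_mul, norm_pow, norm_neg,
    norm_inv, norm_real, Real.norm_of_nonneg (Real.sqrt_nonneg ε), norm_cexp_neg_sq_div_add_I_mul]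
  calc _ = Real.exp (-p ^ 2 / (2 * ε)) *
        ((√ε)⁻¹ ^ s * ‖aeval (((p : ℂ) - I * b) / √ε) (hermite s)‖) := by ring
    _ ≤ Real.exp (-p ^ 2 / (2 * ε)) * (s ! * ∑ m ∈ Finset.range (s / 2 + 1),
          ‖(p : ℂ) - I * b‖ ^ (s - 2 * m) / (2 ^ m * ε ^ (s - m) * m ! * (s - 2 * m)!)) := by
        exact mul_le_mul_of_nonneg_left
          (inv_sqrt_pow_mul_norm_aeval_hermite_div_le hε s _) (Real.exp_pos _).le
    _ ≤ _ := by
        rw [← mul_assoc]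
        gcongr

theorem gaussian_derivative_bound
    (ε b : ℝ) (hε : 0 < ε)
    (f : ℝ → ℂ)
    (hf : ∀ p : ℝ, f p =
      Complex.exp (-(p : ℂ) ^ 2 / (2 * (ε : ℂ)) + Complex.I * (b : ℂ) * (p : ℂ) / (ε : ℂ)))
    (s : ℕ) (hs : 1 ≤ s) (p : ℝ) :
    ‖iteratedDeriv s f p‖ ≤
      Real.exp (-p ^ 2 / (2 * ε)) * (s.factorial : ℝ) *
        ∑ m ∈ Finset.range (s / 2 + 1),
          (|p| + |b|) ^ (s - 2 * m) /
            (2 ^ m * ε ^ (s - m) * (m.factorial : ℝ) * ((s - 2 * m).factorial : ℝ)) :=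
  gaussian_derivative_bound_general ε b hε f hf s p
end

section
/- Let ε > 0, b ∈ ℝ with |b| ≤ B, and f(p) = exp(−p²/(2ε) + ibp/ε). For the truncated-and-discretized approximation Q f = (2L_p/N) Σ_{j=1}^N f(p_j) with midpoints p_j of the uniform partition of [−L_p, L_p] into N intervals, one has |∫_ℝ f(p) dp − Q f| ≤ √(2πε) e^{−L_p²/(2ε)} + (L_p³/(3N²))(4(L_p + B)² ε^{−2} + ε^{−1}). -/
/-!
Split at `∫_{-L}^{L} f`. Since `‖f p‖ = exp (-p² / (2ε))`, the truncation error is at most the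
Gaussian mass outside `[-L, L]`; for `x ≥ L ≥ 0` one has `x² ≥ L² + (x - L)²`, so each tail is at
most `exp (-L² / (2ε))` times the half Gaussian integral `√(2πε) / 2`. On a cell with midpoint `m`
and half-width `δ = L / N`, the symmetric second difference satisfies
`‖f (m + t) + f (m - t) - 2 f m‖ ≤ t² sup ‖f''‖`, and integrating over `t ∈ [0, δ]` bounds the
cell's midpoint error by `δ³ sup ‖f''‖ / 3`. Finally `f'' = (((ib - p) / ε)² - 1 / ε) f` and
`‖f‖ ≤ 1` give `‖f''‖ ≤ (p² + b²) / ε² + 1 / ε`.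
-/

open MeasureTheory Set Finset Real

section MidpointRule

variable {E : Type*} [NormedAddCommGroup E] [NormedSpace ℝ E] {f f' f'' : ℝ → E} {m M : ℝ}

theorem norm_add_sub_two_smul_le (hf : ∀ x, HasDerivAt f (f' x) x)
    (hf' : ∀ x, HasDerivAt f' (f'' x) x) {t : ℝ} (ht : 0 ≤ t)
    (hM : ∀ x ∈ Icc (m - t) (m + t), ‖f'' x‖ ≤ M) :
    ‖f (m + t) + f (m - t) - (2 : ℝ) • f m‖ ≤ M * t ^ 2 := by
  have hf'_sub : ∀ s ∈ Ico 0 t, ‖f' (m + s) - f' (m - s)‖ ≤ M * (2 * s) := by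
    intro s ⟨hs0, hst⟩
    have hsub : Icc (m - s) (m + s) ⊆ Icc (m - t) (m + t) :=
      Icc_subset_Icc (by linarith) (by linarith)
    have := norm_image_sub_le_of_norm_deriv_le_segment' (C := M)
      (fun x _ => (hf' x).hasDerivWithinAt) (fun x hx => hM x (hsub (Ico_subset_Icc_self hx)))
      (m + s) ⟨by linarith, le_rfl⟩
    rwa [show m + s - (m - s) = 2 * s by ring] at this
  have hderiv : ∀ s, HasDerivAt (fun s => f (m + s) + f (m - s) - (2 : ℝ) • f m)
      (f' (m + s) - f' (m - s)) s := fun s => by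
    have := (((hf (m + s)).comp_const_add m s).add ((hf (m - s)).comp_const_sub m s)).sub_const
      ((2 : ℝ) • f m)
    exact this.congr_deriv (sub_eq_add_neg _ _).symm
  refine image_norm_le_of_norm_deriv_right_le_deriv_boundary (B := fun s => M * s ^ 2)
    (fun s _ => (hderiv s).continuousAt.continuousWithinAt)
    (fun s _ => (hderiv s).hasDerivWithinAt) ?_ (fun s => ?_) hf'_sub ⟨ht, le_rfl⟩
  · simp [two_smul]
  · exact ((hasDerivAt_pow 2 s).const_mul M).congr_deriv (by ring)

theorem norm_intervalIntegral_sub_two_mul_smul_le [CompleteSpace E]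
    (hf : ∀ x, HasDerivAt f (f' x) x) (hf' : ∀ x, HasDerivAt f' (f'' x) x) {δ : ℝ}
    (hδ : 0 ≤ δ) (hM : ∀ x ∈ Icc (m - δ) (m + δ), ‖f'' x‖ ≤ M) :
    ‖(∫ x in (m - δ)..(m + δ), f x) - (2 * δ) • f m‖ ≤ M * δ ^ 3 / 3 := by
  have hfc : Continuous f := continuous_iff_continuousAt.2 fun x => (hf x).continuousAt
  set F : ℝ → E := fun u => ∫ x in m..u, f x
  have hF : ∀ u, HasDerivAt F (f u) u := fun u => (hfc.integral_hasStrictDerivAt m u).hasDerivAt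
  have hint : ∀ s, ∫ x in (m - s)..(m + s), f x = F (m + s) - F (m - s) := fun s =>
    (intervalIntegral.integral_interval_sub_left (hfc.intervalIntegrable _ _)
      (hfc.intervalIntegrable _ _)).symm
  have hderiv : ∀ s, HasDerivAt (fun s => F (m + s) - F (m - s) - (2 * s) • f m)
      (f (m + s) + f (m - s) - (2 : ℝ) • f m) s := fun s => by
    have := (((hF (m + s)).comp_const_add m s).sub ((hF (m - s)).comp_const_sub m s)).sub
      (((hasDerivAt_id s).const_mul 2).smul_const (f m))
    exact this.congr_deriv (by rw [sub_neg_eq_add, mul_one])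
  have hbound : ∀ s ∈ Ico 0 δ, ‖f (m + s) + f (m - s) - (2 : ℝ) • f m‖ ≤ M * s ^ 2 :=
    fun s ⟨hs0, hsδ⟩ => norm_add_sub_two_smul_le hf hf' hs0 fun x hx =>
      hM x (Icc_subset_Icc (by linarith) (by linarith) hx)
  rw [hint]
  refine image_norm_le_of_norm_deriv_right_le_deriv_boundary (B := fun s => M * s ^ 3 / 3)
    (fun s _ => (hderiv s).continuousAt.continuousWithinAt)
    (fun s _ => (hderiv s).hasDerivWithinAt) ?_ (fun s => ?_) hbound ⟨hδ, le_rfl⟩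
  · simp [F]
  · exact (((hasDerivAt_pow 3 s).const_mul M).div_const 3).congr_deriv (by ring)

noncomputable def midpointRule (f : ℝ → E) (a b : ℝ) (N : ℕ) : E :=
  ((b - a) / N) • ∑ k ∈ range N, f (a + (k + 1 / 2) * ((b - a) / N))

theorem norm_intervalIntegral_sub_midpointRule_le [CompleteSpace E]
    (hf : ∀ x, HasDerivAt f (f' x) x) (hf' : ∀ x, HasDerivAt f' (f'' x) x) {a b : ℝ}
    (hab : a ≤ b) {N : ℕ} (hN : 0 < N) (hM : ∀ x ∈ Icc a b, ‖f'' x‖ ≤ M) :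
    ‖(∫ x in a..b, f x) - midpointRule f a b N‖ ≤ M * (b - a) ^ 3 / (24 * N ^ 2) := by
  have hfc : Continuous f := continuous_iff_continuousAt.2 fun x => (hf x).continuousAt
  have hN' : (0 : ℝ) < N := Nat.cast_pos.2 hN
  set h := (b - a) / N with h_def
  have hh : 0 ≤ h := div_nonneg (sub_nonneg.2 hab) hN'.le
  set node : ℕ → ℝ := fun k => a + k * h
  have hcell : ∀ k < N, ‖(∫ x in node k..node (k + 1), f x) - h • f (node k + h / 2)‖
      ≤ M * (h / 2) ^ 3 / 3 := by
    intro k hk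
    have hk' : (k : ℝ) + 1 ≤ N := by exact_mod_cast hk
    have hkh : ((k : ℝ) + 1) * h ≤ b - a := by
      rw [h_def, mul_div_assoc']; exact (div_le_iff₀ hN').2 (by nlinarith)
    have hkh0 : 0 ≤ (k : ℝ) * h := mul_nonneg k.cast_nonneg hh
    have := norm_intervalIntegral_sub_two_mul_smul_le (m := node k + h / 2) (δ := h / 2)
      (M := M) hf hf' (by positivity) fun x hx => hM x ⟨by linarith [hx.1], by linarith [hx.2]⟩
    simp only [node, Nat.cast_succ] at this ⊢
    convert this using 4 <;> ring
  have hsum : ∫ x in a..b, f x = ∑ k ∈ range N, ∫ x in node k..node (k + 1), f x := by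
    rw [intervalIntegral.sum_integral_adjacent_intervals fun k _ => hfc.intervalIntegrable _ _]
    simp only [node, CharP.cast_eq_zero, zero_mul, add_zero]
    rw [h_def, mul_div_cancel₀ _ hN'.ne', add_sub_cancel]
  have hrule : midpointRule f a b N = ∑ k ∈ range N, h • f (node k + h / 2) := by
    rw [midpointRule, smul_sum]
    refine sum_congr rfl fun k _ => ?_
    congr 2
    ring
  calc ‖(∫ x in a..b, f x) - midpointRule f a b N‖
      ≤ ∑ k ∈ range N, ‖(∫ x in node k..node (k + 1), f x) - h • f (node k + h / 2)‖ := by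
        rw [hsum, hrule, ← sum_sub_distrib]; exact norm_sum_le _ _
    _ ≤ ∑ k ∈ range N, M * (h / 2) ^ 3 / 3 := sum_le_sum fun k hk => hcell k (mem_range.1 hk)
    _ = M * (b - a) ^ 3 / (24 * N ^ 2) := by
        rw [sum_const, card_range, nsmul_eq_mul, h_def]; field_simp; ring

theorem midpointRule_neg_self (f : ℝ → ℂ) (L : ℝ) (N : ℕ) :
    midpointRule f (-L) L N =
      (2 * L / N) * ∑ j ∈ Finset.Icc 1 N, f (-L + (2 * (j : ℝ) - 1) * L / N) := by
  rw [midpointRule, ← Finset.Ico_add_one_right_eq_Icc, Finset.sum_Ico_eq_sum_range,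
    Nat.add_sub_cancel, Complex.real_smul]
  push_cast
  congr 1
  · ring
  · refine sum_congr rfl fun k _ => ?_
    congr 1
    ring

end MidpointRule

section GaussianTail

variable {a L : ℝ}

theorem integral_Ioi_exp_neg_mul_sq_le (ha : 0 < a) (hL : 0 ≤ L) :
    ∫ x in Ioi L, exp (-a * x ^ 2) ≤ exp (-a * L ^ 2) * (√(π / a) / 2) := by
  have hshift : ∫ x in Ioi L, exp (-a * (x - L) ^ 2) = ∫ x in Ioi 0, exp (-a * x ^ 2) := by
    have := (measurePreserving_add_right volume L).setIntegral_preimage_emb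
      (measurableEmbedding_addRight L) (fun x => exp (-a * (x - L) ^ 2)) (Ioi L)
    simpa [preimage_add_const_Ioi] using this.symm
  calc ∫ x in Ioi L, exp (-a * x ^ 2)
      ≤ ∫ x in Ioi L, exp (-a * L ^ 2) * exp (-a * (x - L) ^ 2) := by
        refine setIntegral_mono_on (integrable_exp_neg_mul_sq ha).integrableOn
          (((integrable_exp_neg_mul_sq ha).comp_sub_right L).const_mul _).integrableOn
          measurableSet_Ioi fun x (hx : L < x) => ?_
        rw [← exp_add]
        exact exp_le_exp.2 (by nlinarith [mul_nonneg ha.le (mul_nonneg hL (sub_nonneg.2 hx.le))])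
    _ = exp (-a * L ^ 2) * (√(π / a) / 2) := by
        rw [integral_const_mul, hshift, integral_gaussian_Ioi]

theorem integral_compl_Ioc_exp_neg_mul_sq_le (ha : 0 < a) (hL : 0 ≤ L) :
    ∫ x in (Ioc (-L) L)ᶜ, exp (-a * x ^ 2) ≤ exp (-a * L ^ 2) * √(π / a) := by
  have hcompl : (Ioc (-L) L)ᶜ = Iic (-L) ∪ Ioi L := by
    ext x; simp [or_iff_not_imp_left]
  have hleft : ∫ x in Iic (-L), exp (-a * x ^ 2) = ∫ x in Ioi L, exp (-a * x ^ 2) := by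
    have := integral_comp_neg_Iic (-L) fun x => exp (-a * x ^ 2)
    simp only [neg_sq, neg_neg] at this
    exact this
  rw [hcompl, setIntegral_union (Iic_disjoint_Ioi (by linarith)) measurableSet_Ioi
      (integrable_exp_neg_mul_sq ha).integrableOn (integrable_exp_neg_mul_sq ha).integrableOn,
    hleft]
  linarith [integral_Ioi_exp_neg_mul_sq_le ha hL]

theorem norm_integral_sub_intervalIntegral_le {E : Type*} [NormedAddCommGroup E]
    [NormedSpace ℝ E] {g : ℝ → E} (hg : AEStronglyMeasurable g)
    (hbound : ∀ x, ‖g x‖ ≤ exp (-a * x ^ 2)) (ha : 0 < a) (hL : 0 ≤ L) :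
    ‖(∫ x, g x) - ∫ x in -L..L, g x‖ ≤ exp (-a * L ^ 2) * √(π / a) := by
  have hgi : Integrable g := (integrable_exp_neg_mul_sq ha).mono' hg (.of_forall hbound)
  rw [intervalIntegral.integral_of_le (by linarith), ← integral_add_compl measurableSet_Ioc hgi,
    add_sub_cancel_left]
  exact (norm_integral_le_of_norm_le (integrable_exp_neg_mul_sq ha).integrableOn
    (.of_forall hbound)).trans (integral_compl_Ioc_exp_neg_mul_sq_le ha hL)

end GaussianTail

noncomputable def gaussianWavePacket (ε b p : ℝ) : ℂ :=
  Complex.exp (-(p : ℂ) ^ 2 / (2 * (ε : ℂ)) + Complex.I * (b : ℂ) * (p : ℂ) / (ε : ℂ))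

section GaussianWavePacket

open Complex

variable {ε b : ℝ}

theorem norm_gaussianWavePacket (p : ℝ) :
    ‖gaussianWavePacket ε b p‖ = Real.exp (-(2 * ε)⁻¹ * p ^ 2) := by
  have : -(p : ℂ) ^ 2 / (2 * ε) + I * b * p / ε =
      ((-(2 * ε)⁻¹ * p ^ 2 : ℝ) : ℂ) + ((b * p / ε : ℝ) : ℂ) * I := by
    push_cast; ring
  rw [gaussianWavePacket, this, Complex.exp_add, norm_mul, Complex.norm_exp_ofReal,
    Complex.norm_exp_ofReal_mul_I, mul_one]

theorem hasDerivAt_gaussianWavePacket (p : ℝ) :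
    HasDerivAt (gaussianWavePacket ε b) ((I * b - p) / ε * gaussianWavePacket ε b p) p := by
  have h : HasDerivAt (fun z : ℂ => -z ^ 2 / (2 * ε) + I * b * z / ε) ((I * b - p) / ε) p := by
    have := (((hasDerivAt_pow 2 (p : ℂ)).neg.div_const (2 * ε)).add
      (((hasDerivAt_id (p : ℂ)).const_mul (I * b)).div_const ε))
    exact this.congr_deriv (by simp only [Nat.add_one_sub_one, pow_one, mul_one]; ring)
  exact h.cexp.comp_ofReal.congr_deriv (mul_comm _ _)

theorem continuous_gaussianWavePacket : Continuous (gaussianWavePacket ε b) :=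
  continuous_iff_continuousAt.2 fun p => (hasDerivAt_gaussianWavePacket p).continuousAt

theorem hasDerivAt_linear_mul_gaussianWavePacket (p : ℝ) :
    HasDerivAt (fun p : ℝ => (I * b - p) / ε * gaussianWavePacket ε b p)
      ((((I * b - p) / ε) ^ 2 - ε⁻¹) * gaussianWavePacket ε b p) p := by
  have hlin : HasDerivAt (fun p : ℝ => (I * b - p) / ε) (-1 / ε) p := by
    simpa only [id_eq] using
      (((hasDerivAt_id (p : ℂ)).const_sub (I * b)).div_const (ε : ℂ)).comp_ofReal
  exact (hlin.mul (hasDerivAt_gaussianWavePacket p)).congr_deriv (by push_cast; ring)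

theorem norm_second_deriv_gaussianWavePacket_le (hε : 0 < ε) (p : ℝ) :
    ‖(((I * b - p) / ε) ^ 2 - ε⁻¹) * gaussianWavePacket ε b p‖ ≤
      (p ^ 2 + b ^ 2) / ε ^ 2 + ε⁻¹ := by
  have hnorm_le_one : ‖gaussianWavePacket ε b p‖ ≤ 1 := by
    rw [norm_gaussianWavePacket]
    exact Real.exp_le_one_iff.2 (by nlinarith [inv_pos.2 (mul_pos two_pos hε), sq_nonneg p])
  have hlin : ‖(I * b - p) / ε‖ ^ 2 = (p ^ 2 + b ^ 2) / ε ^ 2 := by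
    rw [norm_div, div_pow, norm_real, Real.norm_of_nonneg hε.le,
      show I * b - p = ((-p : ℝ) : ℂ) + b * I by push_cast; ring, norm_add_mul_I,
      Real.sq_sqrt (by positivity), neg_sq]
  calc ‖(((I * b - p) / ε) ^ 2 - ε⁻¹) * gaussianWavePacket ε b p‖
      ≤ (‖(I * b - p) / ε‖ ^ 2 + ε⁻¹) * 1 := by
        rw [norm_mul]
        gcongr
        refine (norm_sub_le _ _).trans ?_
        rw [norm_pow, norm_real, Real.norm_of_nonneg (inv_nonneg.2 hε.le)]
    _ = (p ^ 2 + b ^ 2) / ε ^ 2 + ε⁻¹ := by rw [hlin, mul_one]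

end GaussianWavePacket

theorem truncated_midpoint_total_error_general
    (ε b B L : ℝ) (hε : 0 < ε) (hb : |b| ≤ B) (hL : 0 < L)
    (N : ℕ) (hN : 1 ≤ N)
    (f : ℝ → ℂ)
    (hf : ∀ p : ℝ, f p =
      Complex.exp (-(p : ℂ) ^ 2 / (2 * (ε : ℂ)) + Complex.I * (b : ℂ) * (p : ℂ) / (ε : ℂ))) :
    ‖(∫ p : ℝ, f p) -
        (2 * L / N) * ∑ j ∈ Finset.Icc 1 N, f (-L + (2 * (j : ℝ) - 1) * L / N)‖ ≤
      Real.sqrt (2 * Real.pi * ε) * Real.exp (-L ^ 2 / (2 * ε)) +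
        (L ^ 3 / (3 * (N : ℝ) ^ 2)) * (4 * (L + B) ^ 2 * ε ^ (-2 : ℤ) + ε⁻¹) := by
  obtain rfl : f = gaussianWavePacket ε b := funext hf
  have hM : ∀ x ∈ Icc (-L) L,
      ‖(((Complex.I * b - x) / ε) ^ 2 - ε⁻¹) * gaussianWavePacket ε b x‖ ≤
        4 * (L + B) ^ 2 * ε ^ (-2 : ℤ) + ε⁻¹ := fun x hx => by
    refine (norm_second_deriv_gaussianWavePacket_le hε x).trans ?_
    have hx' : |x| ≤ L := abs_le.2 hx
    have hsq : x ^ 2 + b ^ 2 ≤ 4 * (L + B) ^ 2 := by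
      nlinarith [sq_abs x, sq_abs b, abs_nonneg x, abs_nonneg b]
    rw [zpow_neg, zpow_two, ← sq, div_eq_mul_inv]
    gcongr
  have htrunc := norm_integral_sub_intervalIntegral_le
    (continuous_gaussianWavePacket (ε := ε) (b := b)).aestronglyMeasurable
    (fun p => (norm_gaussianWavePacket p).le) (inv_pos.2 (mul_pos two_pos hε)) hL.le
  have hmid := norm_intervalIntegral_sub_midpointRule_le hasDerivAt_gaussianWavePacket
    hasDerivAt_linear_mul_gaussianWavePacket (neg_le_self hL.le) hN hM
  rw [← midpointRule_neg_self]
  calc _ ≤ _ := norm_sub_le_norm_sub_add_norm_sub _ (∫ x in -L..L, gaussianWavePacket ε b x) _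
    _ ≤ _ := add_le_add (htrunc.trans_eq ?_) (hmid.trans_eq ?_)
  · rw [mul_comm, div_inv_eq_mul]
    congr 2 <;> ring
  · ring

theorem truncated_midpoint_total_error
    (ε b B L : ℝ) (hε : 0 < ε) (hb : |b| ≤ B) (hB : 0 ≤ B) (hL : 0 < L)
    (N : ℕ) (hN : 1 ≤ N)
    (f : ℝ → ℂ)
    (hf : ∀ p : ℝ, f p =
      Complex.exp (-(p : ℂ) ^ 2 / (2 * (ε : ℂ)) + Complex.I * (b : ℂ) * (p : ℂ) / (ε : ℂ))) :
    ‖(∫ p : ℝ, f p) -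
        (2 * L / N) * ∑ j ∈ Finset.Icc 1 N, f (-L + (2 * (j : ℝ) - 1) * L / N)‖ ≤
      Real.sqrt (2 * Real.pi * ε) * Real.exp (-L ^ 2 / (2 * ε)) +
        (L ^ 3 / (3 * (N : ℝ) ^ 2)) * (4 * (L + B) ^ 2 * ε ^ (-2 : ℤ) + ε⁻¹) :=
  truncated_midpoint_total_error_general ε b B L hε hb hL N hN f hf
end

section
/- If Z is a complex symmetric d×d matrix with positive definite imaginary part, then Z is invertible and −Z^{−1} also has positive definite imaginary part. -/
/-!
Write `Z = X + i Y` with `X`, `Y` real symmetric. The Hermitian forms of `X` and `Y` are real, so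
`Im (u* Z u) = u* Y u > 0` for every complex `u ≠ 0`; in particular `Z` is injective. For real
`x ≠ 0` put `u = Z⁻¹ x`: since `x` is real, `xᵀ (-Z⁻¹) x = -(Z u)* u = -conj (u* Z u)`, whose
imaginary part is again `Im (u* Z u) > 0`.
-/

open Matrix Complex
open scoped ComplexOrder

namespace Matrix

variable {n : Type*}

lemma IsHermitian.map_ofReal {S : Matrix n n ℝ} (hS : S.IsHermitian) :
    (S.map ofReal).IsHermitian :=
  hS.map _ fun _ => (conj_ofReal _).symm

variable [Fintype n]

lemma re_star_dotProduct_map_ofReal_mulVec (Y : Matrix n n ℝ) (u : n → ℂ) :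
    (star u ⬝ᵥ Y.map ofReal *ᵥ u).re
      = (re ∘ u) ⬝ᵥ Y *ᵥ (re ∘ u) + (im ∘ u) ⬝ᵥ Y *ᵥ (im ∘ u) := by
  simp only [dotProduct, mulVec, Finset.mul_sum, ← Finset.sum_add_distrib, re_sum]
  refine Finset.sum_congr rfl fun i _ => Finset.sum_congr rfl fun j _ => ?_
  simp

lemma star_dotProduct_map_im_mulVec (W : Matrix n n ℂ) (x : n → ℝ) :
    star x ⬝ᵥ W.map im *ᵥ x = (star (ofReal ∘ x) ⬝ᵥ W *ᵥ (ofReal ∘ x)).im := by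
  simp [dotProduct, mulVec, im_sum, Finset.mul_sum]

lemma PosDef.map_ofReal {Y : Matrix n n ℝ} (hY : Y.PosDef) : (Y.map ofReal).PosDef := by
  refine PosDef.of_dotProduct_mulVec_pos hY.isHermitian.map_ofReal fun u hu => ?_
  have hre : 0 < (star u ⬝ᵥ Y.map ofReal *ᵥ u).re := by
    have hparts : re ∘ u ≠ 0 ∨ im ∘ u ≠ 0 := by
      by_contra! h
      exact hu (funext fun i => Complex.ext (congrFun h.1 i) (congrFun h.2 i))
    rw [re_star_dotProduct_map_ofReal_mulVec]
    have hpos : ∀ x : n → ℝ, x ≠ 0 → 0 < x ⬝ᵥ Y *ᵥ x := fun x hx => by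
      simpa using hY.dotProduct_mulVec_pos hx
    have hnonneg : ∀ x : n → ℝ, 0 ≤ x ⬝ᵥ Y *ᵥ x := fun x => by
      simpa using hY.posSemidef.dotProduct_mulVec_nonneg x
    rcases hparts with h | h
    · exact add_pos_of_pos_of_nonneg (hpos _ h) (hnonneg _)
    · exact add_pos_of_nonneg_of_pos (hnonneg _) (hpos _ h)
  exact Complex.pos_iff.2
    ⟨hre, (hY.isHermitian.map_ofReal.im_star_dotProduct_mulVec_self u).symm⟩

lemma im_star_dotProduct_mulVec_of_isSymm {Z : Matrix n n ℂ} (hZ : Z.IsSymm) (u : n → ℂ) :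
    (star u ⬝ᵥ Z *ᵥ u).im = (star u ⬝ᵥ (Z.map im).map ofReal *ᵥ u).re := by
  have hdecomp : Z = (Z.map re).map ofReal + I • (Z.map im).map ofReal := by
    ext i j; simp [Complex.ext_iff]
  have him : (star u ⬝ᵥ (Z.map re).map ofReal *ᵥ u).im = 0 :=
    (isHermitian_iff_isSymm.2 (hZ.map re)).map_ofReal.im_star_dotProduct_mulVec_self u
  conv_lhs => rw [hdecomp]
  simp only [add_mulVec, smul_mulVec, dotProduct_add, dotProduct_smul, smul_eq_mul, add_im,
    mul_im, I_re, I_im, him, zero_mul, one_mul, zero_add]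

lemma im_star_dotProduct_mulVec_pos {Z : Matrix n n ℂ} (hZ : Z.IsSymm) (hY : (Z.map im).PosDef)
    {u : n → ℂ} (hu : u ≠ 0) : 0 < (star u ⬝ᵥ Z *ᵥ u).im := by
  rw [im_star_dotProduct_mulVec_of_isSymm hZ]
  exact hY.map_ofReal.re_dotProduct_pos hu

end Matrix

def siegelUpperHalfSpace (n : Type*) [Fintype n] : Set (Matrix n n ℂ) :=
  {Z | Z.IsSymm ∧ (Z.map im).PosDef}

namespace siegelUpperHalfSpace

variable {n : Type*} [Fintype n] [DecidableEq n] {Z : Matrix n n ℂ}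

theorem isUnit (hZ : Z ∈ siegelUpperHalfSpace n) : IsUnit Z := by
  refine mulVec_injective_iff_isUnit.1 fun u v huv => ?_
  by_contra hne
  have hpos := im_star_dotProduct_mulVec_pos hZ.1 hZ.2 (sub_ne_zero.2 hne)
  rw [mulVec_sub, huv, sub_self, dotProduct_zero, zero_im] at hpos
  exact hpos.false

theorem neg_inv_mem (hZ : Z ∈ siegelUpperHalfSpace n) : -Z⁻¹ ∈ siegelUpperHalfSpace n := by
  have hsymm : (-Z⁻¹).IsSymm := hZ.1.inv.neg
  refine ⟨hsymm, PosDef.of_dotProduct_mulVec_pos (isHermitian_iff_isSymm.2 (hsymm.map im))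
    fun x hx => ?_⟩
  set v : n → ℂ := ofReal ∘ x
  have hv : v ≠ 0 := fun h => hx (funext fun i => ofReal_eq_zero.1 (congrFun h i))
  set u := Z⁻¹ *ᵥ v
  have hZu : Z *ᵥ u = v := by
    rw [mulVec_mulVec, mul_nonsing_inv _ ((isUnit_iff_isUnit_det Z).1 (isUnit hZ)), one_mulVec]
  have hu : u ≠ 0 := fun h => hv (by rw [← hZu, h, mulVec_zero])
  calc 0 < (star u ⬝ᵥ Z *ᵥ u).im := im_star_dotProduct_mulVec_pos hZ.1 hZ.2 hu
    _ = -(star (Z *ᵥ u) ⬝ᵥ u).im := by rw [star_dotProduct, star_def, conj_im]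
    _ = (star v ⬝ᵥ (-Z⁻¹) *ᵥ v).im := by rw [hZu, neg_mulVec, dotProduct_neg, neg_im]
    _ = star x ⬝ᵥ (-Z⁻¹).map im *ᵥ x := (star_dotProduct_map_im_mulVec _ x).symm

end siegelUpperHalfSpace

theorem siegel_neg_inv_mem
    (d : ℕ) (Z : Matrix (Fin d) (Fin d) ℂ)
    (hZ : Z.transpose = Z) (hImZ : (Z.map Complex.im).PosDef) :
    IsUnit Z ∧ (-Z⁻¹).transpose = -Z⁻¹ ∧ ((-Z⁻¹).map Complex.im).PosDef := by
  have hZS : Z ∈ siegelUpperHalfSpace (Fin d) := ⟨hZ, hImZ⟩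
  obtain ⟨hsymm, hpos⟩ := siegelUpperHalfSpace.neg_inv_mem hZS
  exact ⟨siegelUpperHalfSpace.isUnit hZS, hsymm, hpos⟩
end

section
/- Let ε > 0, γ_i > 0, L_q > 0, M ≥ 1, Δq = 2L_q/M, grid q_k = −L_q + (2k−1)Δq/2 for k = 1,…,M, and S(x) = Σ_{k=1}^M (γ_i/(πε))^{1/2} e^{−(γ_i/ε)(x−q_k)²}. Then for all x ∈ [−L_q, L_q], S(x) > (1/(2Δq))(erf(2L_q√(γ_i/ε)) − erf(Δq√(γ_i/ε))). -/
/-!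
Write the Gaussian term as `g |x - q_k|` with `g r = K e^{-c r²}` antitone on `[0, ∞)`. For `t` in
the `k`-th cell `[q_k - Δ/2, q_k + Δ/2]` the triangle inequality gives `g (|x - t| + Δ/2) ≤ g |x - q_k|`,
so `Δ · S x ≥ ∫_{-L}^{L} g (|x - t| + Δ/2) dt`. Splitting at `x`, this is the sum of the integrals of `g`
over `[Δ/2, Δ/2 + (x + L)]` and `[Δ/2, Δ/2 + (L - x)]`; sliding the second one to the right of the first
only lowers it, leaving `∫_{Δ/2}^{2L + Δ/2} g`, which strictly exceeds `∫_Δ^{2L} g`. After the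
substitution `t = √c u`, the right-hand side of the theorem is exactly `(1/Δ) ∫_Δ^{2L} g`.
-/

open intervalIntegral Set

section IntegralComparisons

variable {g : ℝ → ℝ}

theorem integral_le_mul_sum_Icc_of_le {f : ℝ → ℝ} (hf : Continuous f) {a Δ : ℝ} (hΔ : 0 ≤ Δ)
    (v : ℕ → ℝ) (n : ℕ)
    (hv : ∀ k ∈ Finset.Icc 1 n, ∀ t ∈ Icc (a + (k - 1) * Δ) (a + k * Δ), f t ≤ v k) :
    ∫ t in a..a + n * Δ, f t ≤ Δ * ∑ k ∈ Finset.Icc 1 n, v k := by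
  induction n with
  | zero => simp
  | succ n ih =>
    have hcell : ∫ t in a + n * Δ..a + (n + 1 : ℕ) * Δ, f t ≤ Δ * v (n + 1) := by
      have hle : a + n * Δ ≤ a + (n + 1 : ℕ) * Δ := by push_cast; nlinarith
      calc ∫ t in a + n * Δ..a + (n + 1 : ℕ) * Δ, f t
          ≤ ∫ _ in a + n * Δ..a + (n + 1 : ℕ) * Δ, v (n + 1) :=
            integral_mono_on hle (hf.intervalIntegrable _ _) intervalIntegrable_const
              fun t ht => hv (n + 1) (by simp) t (by push_cast at ht ⊢; simpa using ht)
        _ = Δ * v (n + 1) := by simp only [integral_const, smul_eq_mul]; push_cast; ring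
    rw [← integral_add_adjacent_intervals (hf.intervalIntegrable _ _) (hf.intervalIntegrable _ _),
      Finset.sum_Icc_succ_top (by omega), mul_add]
    exact add_le_add (ih fun k hk => hv k (Finset.Icc_subset_Icc_right n.le_succ hk)) hcell

theorem AntitoneOn.apply_abs_sub_add_le (hg : AntitoneOn g (Ici 0)) {x q t δ : ℝ}
    (ht : |t - q| ≤ δ) : g (|x - t| + δ) ≤ g |x - q| := by
  refine hg (abs_nonneg (x - q)) (add_nonneg (abs_nonneg (x - t)) ((abs_nonneg _).trans ht)) ?_
  calc |x - q| ≤ |x - t| + |t - q| := abs_sub_le x t q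
    _ ≤ |x - t| + δ := by gcongr

theorem integral_apply_abs_sub_add (hg : Continuous g) {a b x δ : ℝ} (hax : a ≤ x) (hxb : x ≤ b) :
    ∫ t in a..b, g (|x - t| + δ) =
      (∫ u in δ..δ + (x - a), g u) + ∫ u in δ..δ + (b - x), g u := by
  have hleft : ∫ t in a..x, g (|x - t| + δ) = ∫ u in δ..δ + (x - a), g u := by
    rw [integral_congr (g := fun t => g (x + δ - t)) fun t ht => by
      rw [uIcc_of_le hax] at ht; simp only [abs_of_nonneg (sub_nonneg.2 ht.2)]; ring_nf,
      integral_comp_sub_left]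
    ring_nf
  have hright : ∫ t in x..b, g (|x - t| + δ) = ∫ u in δ..δ + (b - x), g u := by
    rw [integral_congr (g := fun t => g (t + (δ - x))) fun t ht => by
      rw [uIcc_of_le hxb] at ht; simp only [abs_of_nonpos (sub_nonpos.2 ht.1)]; ring_nf,
      integral_comp_add_right]
    ring_nf
  have hint : ∀ c d, IntervalIntegrable (fun t => g (|x - t| + δ)) MeasureTheory.volume c d :=
    fun c d => by apply Continuous.intervalIntegrable; fun_prop
  rw [← integral_add_adjacent_intervals (hint a x) (hint x b), hleft, hright]

theorem AntitoneOn.integral_add_le (hg : AntitoneOn g (Ici 0)) (hgc : Continuous g) {δ a b : ℝ}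
    (hδ : 0 ≤ δ) (ha : 0 ≤ a) (hb : 0 ≤ b) :
    ∫ u in δ..δ + (a + b), g u ≤ (∫ u in δ..δ + a, g u) + ∫ u in δ..δ + b, g u := by
  have hslide : ∫ u in δ + a..δ + (a + b), g u ≤ ∫ u in δ..δ + b, g u := by
    have hshift : ∫ u in δ + a..δ + (a + b), g u = ∫ u in δ..δ + b, g (u + a) := by
      rw [integral_comp_add_right]; ring_nf
    rw [hshift]
    refine integral_mono_on (by linarith) (by apply Continuous.intervalIntegrable; fun_prop)
      (hgc.intervalIntegrable _ _) fun u hu => ?_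
    exact hg (show (0 : ℝ) ≤ u by linarith [hu.1]) (show (0 : ℝ) ≤ u + a by linarith [hu.1])
      (by linarith)
  rw [← integral_add_adjacent_intervals (hgc.intervalIntegrable δ (δ + a))
    (hgc.intervalIntegrable _ _)]
  linarith

theorem integral_lt_integral_of_pos_of_lt_of_le (hgc : Continuous g)
    (hg : ∀ u, 0 < g u) {a b c d : ℝ} (hab : a < b) (hcd : c ≤ d) :
    ∫ u in b..c, g u < ∫ u in a..d, g u := by
  have hint : ∀ a b, IntervalIntegrable g MeasureTheory.volume a b := hgc.intervalIntegrable
  have hleft : 0 < ∫ u in a..b, g u := intervalIntegral_pos_of_pos_on (hint a b) (fun u _ => hg u) hab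
  have hright : 0 ≤ ∫ u in c..d, g u := integral_nonneg hcd fun u _ => (hg u).le
  rw [← integral_add_adjacent_intervals (hint a b) (hint b d),
    ← integral_add_adjacent_intervals (hint b c) (hint c d)]
  linarith

end IntegralComparisons

theorem antitoneOn_gaussian {K c : ℝ} (hK : 0 ≤ K) (hc : 0 ≤ c) :
    AntitoneOn (fun r => K * Real.exp (-c * r ^ 2)) (Ici 0) := by
  intro r hr s _ hrs
  have : r ^ 2 ≤ s ^ 2 := pow_le_pow_left₀ hr hrs 2
  exact mul_le_mul_of_nonneg_left (Real.exp_le_exp.2 (by nlinarith)) hK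

theorem integral_exp_neg_sq_sub_integral_exp_neg_sq {c : ℝ} (hc : 0 < c) (a b : ℝ) :
    (∫ t in (0 : ℝ)..b * √c, Real.exp (-t ^ 2)) - ∫ t in (0 : ℝ)..a * √c, Real.exp (-t ^ 2) =
      √c * ∫ u in a..b, Real.exp (-c * u ^ 2) := by
  have hs : 0 < √c := Real.sqrt_pos.2 hc
  have hsq : ∀ u : ℝ, Real.exp (-(u * √c) ^ 2) = Real.exp (-c * u ^ 2) := fun u => by
    rw [mul_pow, Real.sq_sqrt hc.le]; ring_nf
  have hint : ∀ a b, IntervalIntegrable (fun t : ℝ => Real.exp (-t ^ 2)) MeasureTheory.volume a b :=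
    fun a b => by apply Continuous.intervalIntegrable; fun_prop
  rw [integral_interval_sub_left (hint _ _) (hint _ _), ← funext hsq,
    integral_comp_mul_right (fun t => Real.exp (-t ^ 2)) hs.ne', smul_eq_mul,
    mul_inv_cancel_left₀ hs.ne']

theorem finite_summation_curve_lower_bound
    (ε γi Lq : ℝ) (hε : 0 < ε) (hγ : 0 < γi) (hL : 0 < Lq)
    (M : ℕ) (hM : 1 ≤ M) (Δq : ℝ) (hΔ : Δq = 2 * Lq / M)
    (q : ℕ → ℝ) (hq : ∀ k, q k = -Lq + (2 * (k : ℝ) - 1) * Δq / 2)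
    (S : ℝ → ℝ)
    (hS : ∀ x, S x = ∑ k ∈ Finset.Icc 1 M,
      Real.sqrt (γi / (Real.pi * ε)) * Real.exp (-(γi / ε) * (x - q k) ^ 2)) :
    ∀ x ∈ Set.Icc (-Lq) Lq,
      (1 / (2 * Δq)) *
          ((2 / Real.sqrt Real.pi) * (∫ t in (0 : ℝ)..(2 * Lq * Real.sqrt (γi / ε)), Real.exp (-t ^ 2)) -
            (2 / Real.sqrt Real.pi) * ∫ t in (0 : ℝ)..(Δq * Real.sqrt (γi / ε)), Real.exp (-t ^ 2)) <
        S x := by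
  intro x ⟨hxl, hxr⟩
  set c := γi / ε
  set K := √(γi / (Real.pi * ε))
  set g : ℝ → ℝ := fun r => K * Real.exp (-c * r ^ 2)
  have hc : 0 < c := div_pos hγ hε
  have hgc : Continuous g := by fun_prop
  have hg_pos : ∀ u, 0 < g u := fun u => mul_pos (Real.sqrt_pos.2 (by positivity)) (Real.exp_pos _)
  have hg_anti : AntitoneOn g (Ici 0) := antitoneOn_gaussian (Real.sqrt_nonneg _) hc.le
  have hMpos : (0 : ℝ) < M := Nat.cast_pos.2 hM
  have hΔpos : 0 < Δq := hΔ ▸ div_pos (by positivity) hMpos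
  have hMΔ : (M : ℝ) * Δq = 2 * Lq := by rw [hΔ, mul_div_cancel₀ _ hMpos.ne']
  have hRHS : (1 / (2 * Δq)) *
      ((2 / √Real.pi) * (∫ t in (0 : ℝ)..(2 * Lq * √c), Real.exp (-t ^ 2)) -
        (2 / √Real.pi) * ∫ t in (0 : ℝ)..(Δq * √c), Real.exp (-t ^ 2)) =
      (∫ u in Δq..2 * Lq, g u) / Δq := by
    have hK : K = √c / √Real.pi := by
      rw [← Real.sqrt_div hc.le, div_div, mul_comm ε]
    rw [← mul_sub, integral_exp_neg_sq_sub_integral_exp_neg_sq hc, integral_const_mul, hK]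
    field_simp
  have hcells : ∫ t in -Lq..Lq, g (|x - t| + Δq / 2) ≤ Δq * S x := by
    have h := integral_le_mul_sum_Icc_of_le (f := fun t => g (|x - t| + Δq / 2)) (by fun_prop)
      (a := -Lq) hΔpos.le (fun k => g |x - q k|) M fun k _ t ht =>
        hg_anti.apply_abs_sub_add_le (abs_le.2 ⟨by linarith [hq k, ht.1], by linarith [hq k, ht.2]⟩)
    rw [hMΔ, show -Lq + 2 * Lq = Lq by ring] at h
    rw [hS]
    simpa only [g, sq_abs] using h
  rw [hRHS, div_lt_iff₀ hΔpos]
  calc ∫ u in Δq..2 * Lq, g u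
      < ∫ u in Δq / 2..Δq / 2 + ((x - -Lq) + (Lq - x)), g u :=
        integral_lt_integral_of_pos_of_lt_of_le hgc hg_pos (by linarith) (by linarith)
    _ ≤ (∫ u in Δq / 2..Δq / 2 + (x - -Lq), g u) + ∫ u in Δq / 2..Δq / 2 + (Lq - x), g u :=
        hg_anti.integral_add_le hgc (by positivity) (by linarith) (by linarith)
    _ = ∫ t in -Lq..Lq, g (|x - t| + Δq / 2) := (integral_apply_abs_sub_add hgc hxl hxr).symm
    _ ≤ Δq * S x := hcells
    _ = S x * Δq := mul_comm _ _
end
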